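/- arXiv:2112.00782 — 5 statements merged into one kernel-verified Lean document; each statement's English description precedes it below -/
import Mathlib

section
/- For any function u in H¹(0,a) with u(0) = 0 and u not identically zero, the Pólya quotient (∫₀ᵃ u dx)² / ∫₀ᵃ (u')² dx is at most a³/3, with equality attained by u(x) = x(2a-x)/2. -/
/-!
Since `u(0) = 0`, integrating by parts against `x - a` gives `∫₀ᵃ u = ∫₀ᵃ (a - t) u'(t) dt`, and
Cauchy–Schwarz bounds the square of the right-hand side by `∫₀ᵃ (a - t)² dt · ∫₀ᵃ (u')² =
(a³/3) ∫₀ᵃ (u')²`. Equality holds when `u'` is proportional to the weight `a - t`, i.e. for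
`u(x) = x(2a - x)/2`.
-/

open MeasureTheory intervalIntegral Set

theorem MeasureTheory.sq_integral_mul_le_integral_sq_mul_integral_sq {α : Type*}
    [MeasurableSpace α] {μ : Measure α} {f g : α → ℝ} (hf : Integrable (fun x => f x ^ 2) μ)
    (hg : Integrable (fun x => g x ^ 2) μ) (hfg : Integrable (fun x => f x * g x) μ) :
    (∫ x, f x * g x ∂μ) ^ 2 ≤ (∫ x, f x ^ 2 ∂μ) * ∫ x, g x ^ 2 ∂μ := by
  have hquad : ∀ s : ℝ, 0 ≤ (∫ x, g x ^ 2 ∂μ) * (s * s) + (-2 * ∫ x, f x * g x ∂μ) * s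
      + ∫ x, f x ^ 2 ∂μ := by
    intro s
    have hexpand : ∫ x, (f x - s * g x) ^ 2 ∂μ
        = (∫ x, g x ^ 2 ∂μ) * (s * s) + (-2 * ∫ x, f x * g x ∂μ) * s + ∫ x, f x ^ 2 ∂μ := by
      have hpt : ∀ x, (f x - s * g x) ^ 2 = f x ^ 2 - (2 * s) * (f x * g x) + (s * s) * g x ^ 2 :=
        fun x => by ring
      simp only [hpt]
      rw [MeasureTheory.integral_add (by exact hf.sub (hfg.const_mul _)) (hg.const_mul _),
        MeasureTheory.integral_sub hf (hfg.const_mul _), MeasureTheory.integral_const_mul,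
        MeasureTheory.integral_const_mul]
      ring
    exact hexpand ▸ integral_nonneg fun x => sq_nonneg _
  have hdiscrim := discrim_le_zero hquad
  rw [discrim] at hdiscrim
  linarith

theorem intervalIntegral.sq_integral_mul_le_integral_sq_mul_integral_sq {f g : ℝ → ℝ} {a b : ℝ}
    (hab : a ≤ b) (hf : IntervalIntegrable (fun x => f x ^ 2) volume a b)
    (hg : IntervalIntegrable (fun x => g x ^ 2) volume a b)
    (hfg : IntervalIntegrable (fun x => f x * g x) volume a b) :
    (∫ x in a..b, f x * g x) ^ 2 ≤ (∫ x in a..b, f x ^ 2) * ∫ x in a..b, g x ^ 2 := by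
  simp only [integral_of_le hab]
  exact MeasureTheory.sq_integral_mul_le_integral_sq_mul_integral_sq hf.1 hg.1 hfg.1

theorem IntervalIntegrable.integral_integral_eq_integral_sub_mul {f : ℝ → ℝ} {a b : ℝ}
    (hf : IntervalIntegrable f volume a b) :
    ∫ x in a..b, (∫ t in a..x, f t) = ∫ t in a..b, (b - t) * f t := by
  have hprimitive := hf.absolutelyContinuousOnInterval_intervalIntegral left_mem_uIcc
  have hweight : AbsolutelyContinuousOnInterval (fun x => x - b) a b :=
    ContDiffOn.absolutelyContinuousOnInterval (by fun_prop)
  have hderiv : (fun x => deriv (fun x => ∫ t in a..x, f t) x * (x - b))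
      =ᵐ[volume.restrict (uIoc a b)] fun t => -((b - t) * f t) := by
    rw [Filter.EventuallyEq, ae_restrict_iff' measurableSet_uIoc]
    filter_upwards [hf.ae_hasDerivAt_integral] with x hx hxab
    rw [(hx (uIoc_subset_uIcc hxab) a left_mem_uIcc).deriv]
    ring
  have hparts := hprimitive.integral_mul_deriv_eq_deriv_mul hweight
  simp only [deriv_sub_const, deriv_id'', mul_one, sub_self, mul_zero, integral_same, zero_mul,
    zero_sub] at hparts
  rw [hparts, integral_congr_ae_restrict hderiv, intervalIntegral.integral_neg, neg_neg]

theorem integral_sub_sq (a b : ℝ) : ∫ x in b..a, (a - x) ^ 2 = (a - b) ^ 3 / 3 := by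
  norm_num [intervalIntegral.integral_comp_sub_left fun x => x ^ 2]

theorem integral_mul_two_mul_sub_div_two (a : ℝ) :
    ∫ x in (0:ℝ)..a, x * (2 * a - x) / 2 = a ^ 3 / 3 := by
  have hsplit : ∀ x : ℝ, x * (2 * a - x) / 2 = a * x - x ^ 2 / 2 := fun x => by ring
  simp only [hsplit]
  rw [intervalIntegral.integral_sub (Continuous.intervalIntegrable (by fun_prop) _ _)
      (Continuous.intervalIntegrable (by fun_prop) _ _),
    intervalIntegral.integral_const_mul, intervalIntegral.integral_div, integral_id, integral_pow]
  ring

/-- For any `u ∈ H¹(0,a)` with `u(0) = 0` and `u` not identically zero, the Pólya quotient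
`(∫₀ᵃ u)² / ∫₀ᵃ (u')²` is at most `a³/3`, with equality attained by `u(x) = x(2a-x)/2`
(whose derivative is `a - x`). -/
theorem stmt4 (a : ℝ) (ha : 0 < a) :
    (∀ u u' : ℝ → ℝ,
        IntervalIntegrable u' volume 0 a →
        IntervalIntegrable (fun x => (u' x) ^ 2) volume 0 a →
        (∀ x ∈ Set.Icc (0:ℝ) a, u x = ∫ t in (0:ℝ)..x, u' t) →
        0 < (∫ x in (0:ℝ)..a, (u' x) ^ 2) →
        (∫ x in (0:ℝ)..a, u x) ^ 2 / (∫ x in (0:ℝ)..a, (u' x) ^ 2) ≤ a ^ 3 / 3) ∧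
      (∫ x in (0:ℝ)..a, x * (2 * a - x) / 2) ^ 2 /
          (∫ x in (0:ℝ)..a, (a - x) ^ 2) = a ^ 3 / 3 := by
  have hweight_sq : ∫ x in (0:ℝ)..a, (a - x) ^ 2 = a ^ 3 / 3 := by
    rw [integral_sub_sq, sub_zero]
  refine ⟨fun u u' hu' hu'_sq hu hpos => ?_, ?_⟩
  · have hmean : ∫ x in (0:ℝ)..a, u x = ∫ t in (0:ℝ)..a, (a - t) * u' t := by
      rw [integral_congr fun x hx => hu x (uIcc_of_le ha.le ▸ hx)]
      exact hu'.integral_integral_eq_integral_sub_mul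
    rw [hmean, div_le_iff₀ hpos, ← hweight_sq]
    exact intervalIntegral.sq_integral_mul_le_integral_sq_mul_integral_sq ha.le
      (Continuous.intervalIntegrable (by fun_prop) _ _) hu'_sq
      (hu'.continuousOn_mul (by fun_prop))
  · rw [integral_mul_two_mul_sub_div_two, hweight_sq, sq, mul_self_div_self]
end

section
/- For the lasso graph with a pendant edge of length ℓ₁ (with Dirichlet condition at its free endpoint) attached to a loop of length ℓ₂, the torsional rigidity equals (ℓ₁³ + ℓ₂³)/12 + (ℓ₁ + 2ℓ₂)²ℓ₁/4, and the maximum of the torsion function is ℓ₁²/2 + ℓ₁ℓ₂ + ℓ₂²/8. -/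
open MeasureTheory intervalIntegral
open Set

/-! On each edge `v'' = -1` forces `v` to be a quadratic with leading coefficient `-1/2`.
Continuity around the loop makes the loop profile symmetric, so its slope at the joint is
`ℓ₂ / 2`; Kirchhoff's condition then gives slope `ℓ₁ + ℓ₂` at the Dirichlet end, and continuity
at the joint fixes the constant term of the loop profile. Integrating the two quadratics gives the
rigidity; the pendant profile increases up to the joint, so the maximum is attained at the
midpoint of the loop. -/

section SecondDerivativeConstant

variable {f f' : ℝ → ℝ} {a b c : ℝ}

theorem eqOn_affine_of_hasDerivAt_const (hf' : ∀ x ∈ Icc a b, HasDerivAt f' c x) :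
    EqOn f' (fun x => f' a + c * (x - a)) (Icc a b) := by
  have hg (x : ℝ) : HasDerivAt (fun x => f' a + c * (x - a)) c x := by
    simpa using (((hasDerivAt_id x).sub_const a).const_mul c).const_add (f' a)
  exact eq_of_has_deriv_right_eq
    (fun x hx => (hf' x (Ico_subset_Icc_self hx)).hasDerivWithinAt)
    (fun x _ => (hg x).hasDerivWithinAt)
    (fun x hx => (hf' x hx).continuousAt.continuousWithinAt)
    (fun x _ => (hg x).continuousAt.continuousWithinAt) (by simp)

theorem eqOn_quadratic_of_hasDerivAt_const
    (hf : ∀ x ∈ Icc a b, HasDerivAt f (f' x) x) (hf' : ∀ x ∈ Icc a b, HasDerivAt f' c x) :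
    EqOn f (fun x => f a + f' a * (x - a) + c * (x - a) ^ 2 / 2) (Icc a b) := by
  have hg (x : ℝ) : HasDerivAt (fun x => f a + f' a * (x - a) + c * (x - a) ^ 2 / 2)
      (f' a + c * (x - a)) x := by
    have h := ((((hasDerivAt_id x).sub_const a).const_mul (f' a)).const_add (f a)).add
      (((((hasDerivAt_id x).sub_const a).pow 2).const_mul c).div_const 2)
    exact h.congr_deriv (by simp; ring)
  exact eq_of_has_deriv_right_eq
    (fun x hx => (hf x (Ico_subset_Icc_self hx)).hasDerivWithinAt.congr_deriv
      (eqOn_affine_of_hasDerivAt_const hf' (Ico_subset_Icc_self hx)))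
    (fun x _ => (hg x).hasDerivWithinAt)
    (fun x hx => (hf x hx).continuousAt.continuousWithinAt)
    (fun x _ => (hg x).continuousAt.continuousWithinAt) (by simp)

end SecondDerivativeConstant

theorem integral_eq_of_eqOn_quadratic {f : ℝ → ℝ} {L p q c : ℝ} (hL : 0 ≤ L)
    (hf : EqOn f (fun x => p + q * x + c * x ^ 2 / 2) (Icc 0 L)) :
    ∫ x in (0:ℝ)..L, f x = p * L + q * L ^ 2 / 2 + c * L ^ 3 / 6 := by
  have hint (g : ℝ → ℝ) (hg : Continuous g) : IntervalIntegrable g volume 0 L :=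
    hg.intervalIntegrable 0 L
  rw [integral_congr (uIcc_of_le hL ▸ hf), integral_add (hint _ (by fun_prop)) (hint _ (by fun_prop)),
    integral_add (hint _ (by fun_prop)) (hint _ (by fun_prop)),
    intervalIntegral.integral_const_mul]
  simp
  ring

theorem lasso_torsion_eqOn {ℓ₁ ℓ₂ : ℝ} (h1 : 0 < ℓ₁) (h2 : 0 < ℓ₂) {v₁ v₁' v₂ v₂' : ℝ → ℝ}
    (hder1 : ∀ x ∈ Icc 0 ℓ₁, HasDerivAt v₁ (v₁' x) x)
    (hder1' : ∀ x ∈ Icc 0 ℓ₁, HasDerivAt v₁' (-1) x)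
    (hder2 : ∀ x ∈ Icc 0 ℓ₂, HasDerivAt v₂ (v₂' x) x)
    (hder2' : ∀ x ∈ Icc 0 ℓ₂, HasDerivAt v₂' (-1) x)
    (hD : v₁ 0 = 0) (hc1 : v₁ ℓ₁ = v₂ 0) (hc2 : v₂ 0 = v₂ ℓ₂)
    (hKir : v₂' 0 - v₂' ℓ₂ - v₁' ℓ₁ = 0) :
    EqOn v₁ (fun x => (ℓ₁ + ℓ₂) * x - x ^ 2 / 2) (Icc 0 ℓ₁) ∧
      EqOn v₂ (fun x => ℓ₁ ^ 2 / 2 + ℓ₁ * ℓ₂ + ℓ₂ / 2 * x - x ^ 2 / 2) (Icc 0 ℓ₂) := by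
  have hℓ₁ : ℓ₁ ∈ Icc 0 ℓ₁ := right_mem_Icc.2 h1.le
  have hℓ₂ : ℓ₂ ∈ Icc 0 ℓ₂ := right_mem_Icc.2 h2.le
  have hv₁ := eqOn_quadratic_of_hasDerivAt_const hder1 hder1'
  have hv₂ := eqOn_quadratic_of_hasDerivAt_const hder2 hder2'
  have hv₁' := eqOn_affine_of_hasDerivAt_const hder1'
  have hv₂' := eqOn_affine_of_hasDerivAt_const hder2'
  have hslope₂ : v₂' 0 = ℓ₂ / 2 := by
    have h := hc2.trans (hv₂ hℓ₂)
    simp only [sub_zero] at h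
    exact mul_right_cancel₀ h2.ne' (by linarith)
  have hslope₁ : v₁' 0 = ℓ₁ + ℓ₂ := by
    have e₁ := hv₁' hℓ₁
    have e₂ := hv₂' hℓ₂
    simp only [sub_zero] at e₁ e₂
    linarith
  have hjoint : v₂ 0 = ℓ₁ ^ 2 / 2 + ℓ₁ * ℓ₂ := by
    rw [← hc1, hv₁ hℓ₁, hD, hslope₁]
    ring
  refine ⟨fun x hx => ?_, fun x hx => ?_⟩
  · rw [hv₁ hx, hD, hslope₁]
    ring
  · rw [hv₂ hx, hjoint, hslope₂]
    ring

theorem isGreatest_lasso_torsion_values {ℓ₁ ℓ₂ : ℝ} (h2 : 0 < ℓ₂) :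
    IsGreatest ((fun x => (ℓ₁ + ℓ₂) * x - x ^ 2 / 2) '' Icc 0 ℓ₁ ∪
        (fun x => ℓ₁ ^ 2 / 2 + ℓ₁ * ℓ₂ + ℓ₂ / 2 * x - x ^ 2 / 2) '' Icc 0 ℓ₂)
      (ℓ₁ ^ 2 / 2 + ℓ₁ * ℓ₂ + ℓ₂ ^ 2 / 8) := by
  refine ⟨Or.inr ⟨ℓ₂ / 2, ⟨by linarith, by linarith⟩, by ring⟩, ?_⟩
  rintro y (⟨x, ⟨hx0, hxℓ⟩, rfl⟩ | ⟨x, -, rfl⟩)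
  · nlinarith [mul_nonneg (sub_nonneg.2 hxℓ) (by linarith : (0:ℝ) ≤ ℓ₁ + 2 * ℓ₂ - x), sq_nonneg ℓ₂]
  · nlinarith [sq_nonneg (x - ℓ₂ / 2)]

/-- For the lasso graph (pendant edge of length `ℓ₁` with Dirichlet condition at its free
endpoint, attached to a loop of length `ℓ₂`), the torsional rigidity equals
`(ℓ₁³+ℓ₂³)/12 + (ℓ₁+2ℓ₂)²ℓ₁/4` and the maximum of the torsion function is
`ℓ₁²/2 + ℓ₁ℓ₂ + ℓ₂²/8`. -/
theorem stmt8 (ℓ₁ ℓ₂ : ℝ) (h1 : 0 < ℓ₁) (h2 : 0 < ℓ₂)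
    (v₁ v₁' v₂ v₂' : ℝ → ℝ)
    (hder1 : ∀ x ∈ Set.Icc (0:ℝ) ℓ₁, HasDerivAt v₁ (v₁' x) x)
    (hder1' : ∀ x ∈ Set.Icc (0:ℝ) ℓ₁, HasDerivAt v₁' (-1) x)
    (hder2 : ∀ x ∈ Set.Icc (0:ℝ) ℓ₂, HasDerivAt v₂ (v₂' x) x)
    (hder2' : ∀ x ∈ Set.Icc (0:ℝ) ℓ₂, HasDerivAt v₂' (-1) x)
    (hD : v₁ 0 = 0)
    (hc1 : v₁ ℓ₁ = v₂ 0) (hc2 : v₂ 0 = v₂ ℓ₂)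
    (hKir : v₂' 0 - v₂' ℓ₂ - v₁' ℓ₁ = 0) :
    ((∫ x in (0:ℝ)..ℓ₁, v₁ x) + ∫ x in (0:ℝ)..ℓ₂, v₂ x) =
        (ℓ₁ ^ 3 + ℓ₂ ^ 3) / 12 + (ℓ₁ + 2 * ℓ₂) ^ 2 * ℓ₁ / 4 ∧
      IsGreatest (v₁ '' Set.Icc (0:ℝ) ℓ₁ ∪ v₂ '' Set.Icc (0:ℝ) ℓ₂)
        (ℓ₁ ^ 2 / 2 + ℓ₁ * ℓ₂ + ℓ₂ ^ 2 / 8) := by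
  obtain ⟨hv₁, hv₂⟩ :=
    lasso_torsion_eqOn h1 h2 hder1 hder1' hder2 hder2' hD hc1 hc2 hKir
  refine ⟨?_, ?_⟩
  · rw [integral_eq_of_eqOn_quadratic (p := 0) (q := ℓ₁ + ℓ₂) (c := -1) h1.le
        fun x hx => by rw [hv₁ hx]; ring,
      integral_eq_of_eqOn_quadratic (p := ℓ₁ ^ 2 / 2 + ℓ₁ * ℓ₂) (q := ℓ₂ / 2) (c := -1) h2.le
        fun x hx => by rw [hv₂ hx]; ring]
    ring
  · rw [hv₁.image_eq, hv₂.image_eq]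
    exact isGreatest_lasso_torsion_values h2
end

section
/- The restriction g of the torsion function v of a metric graph G to the vertex set satisfies the discrete system: g(v) = 0 for Dirichlet vertices v, and (1/d_v^ℓ) Σ_{e={v,w}} (g(v) - g(w))/ℓ_e = 1/2 for all natural vertices v, where d_v^ℓ = Σ_{e ∋ v} ℓ_e is the metric degree. -/
open MeasureTheory Finset

/-!
On an edge of length `ℓ` the torsion function is the quadratic `v(x) = v(0) + v'(0) x - x²/2`,
so at either endpoint its derivative in the direction of the edge is
`(v(other end) - v(this end))/ℓ + ℓ/2`. At a natural vertex the Kirchhoff condition says these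
add up to zero, i.e. the difference quotients `(v(this end) - v(other end))/ℓ` add up to half
the metric degree.
-/

section EdgeProfile

variable {f f' : ℝ → ℝ} {L : ℝ}

theorem eq_sub_of_hasDerivAt_neg_one (h2 : ∀ x ∈ Set.Icc 0 L, HasDerivAt f' (-1) x) :
    ∀ x ∈ Set.Icc 0 L, f' x = f' 0 - x := by
  have hconst := constant_of_has_deriv_right_zero (f := fun x => f' x + x)
    (fun x hx => ((h2 x hx).add (hasDerivAt_id' x)).continuousAt.continuousWithinAt)
    (fun x hx => by
      have hderiv := ((h2 x (Set.Ico_subset_Icc_self hx)).add (hasDerivAt_id' x)).hasDerivWithinAt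
        (s := Set.Ici x)
      rwa [neg_add_cancel] at hderiv)
  intro x hx
  linarith [hconst x hx]

theorem eq_quadratic_of_hasDerivAt_of_hasDerivAt_neg_one
    (h1 : ∀ x ∈ Set.Icc 0 L, HasDerivAt f (f' x) x)
    (h2 : ∀ x ∈ Set.Icc 0 L, HasDerivAt f' (-1) x) :
    ∀ x ∈ Set.Icc 0 L, f x = f 0 + f' 0 * x - x ^ 2 / 2 := by
  have hquad : ∀ x, HasDerivAt (fun x => f' 0 * x - x ^ 2 / 2) (f' 0 - x) x := fun x => by
    have hpow : HasDerivAt (fun x : ℝ => x ^ 2 / 2) x x := by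
      simpa using (hasDerivAt_pow 2 x).div_const 2
    exact (by simpa using (hasDerivAt_id' x).const_mul (f' 0) :
      HasDerivAt (fun x => f' 0 * x) (f' 0) x).sub hpow
  have hconst := constant_of_has_deriv_right_zero
    (f := fun x => f x - (f' 0 * x - x ^ 2 / 2))
    (fun x hx => ((h1 x hx).sub (hquad x)).continuousAt.continuousWithinAt)
    (fun x hx => by
      have hx' := Set.Ico_subset_Icc_self hx
      have hderiv := ((h1 x hx').sub (hquad x)).hasDerivWithinAt (s := Set.Ici x)
      rwa [eq_sub_of_hasDerivAt_neg_one h2 x hx', sub_self] at hderiv)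
  intro x hx
  linarith [hconst x hx]

variable (h1 : ∀ x ∈ Set.Icc 0 L, HasDerivAt f (f' x) x)
  (h2 : ∀ x ∈ Set.Icc 0 L, HasDerivAt f' (-1) x)
include h1 h2

theorem sub_div_eq_half_sub_deriv_left (hL : 0 < L) : (f 0 - f L) / L = L / 2 - f' 0 := by
  rw [eq_quadratic_of_hasDerivAt_of_hasDerivAt_neg_one h1 h2 L ⟨hL.le, le_rfl⟩]
  field_simp
  ring

theorem sub_div_eq_deriv_right_add_half (hL : 0 < L) : (f L - f 0) / L = f' L + L / 2 := by
  rw [eq_sub_of_hasDerivAt_neg_one h2 L ⟨hL.le, le_rfl⟩,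
    eq_quadratic_of_hasDerivAt_of_hasDerivAt_neg_one h1 h2 L ⟨hL.le, le_rfl⟩]
  field_simp
  ring

end EdgeProfile

theorem sum_filter_add_sum_filter_pos {E : Type*} [Fintype E] {ℓ : E → ℝ} (hℓ : ∀ e, 0 < ℓ e)
    {p q : E → Prop} [DecidablePred p] [DecidablePred q] (h : ∃ e, p e ∨ q e) :
    0 < (∑ e ∈ univ.filter p, ℓ e) + ∑ e ∈ univ.filter q, ℓ e := by
  have hnonneg (r : E → Prop) [DecidablePred r] : 0 ≤ ∑ e ∈ univ.filter r, ℓ e :=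
    sum_nonneg fun e _ => (hℓ e).le
  have hpos (r : E → Prop) [DecidablePred r] (e : E) (he : r e) : 0 < ∑ e ∈ univ.filter r, ℓ e :=
    sum_pos' (fun e _ => (hℓ e).le) ⟨e, by simpa using he, hℓ e⟩
  obtain ⟨e, he | he⟩ := h
  · exact add_pos_of_pos_of_nonneg (hpos p e he) (hnonneg q)
  · exact add_pos_of_nonneg_of_pos (hnonneg p) (hpos q e he)

/-- Edge `e` is identified with `[0, ℓ e]`, the point `0` being the vertex `s e` and `ℓ e` the
vertex `t e`; `ve e` and `ve' e` are the torsion function and its derivative on that edge. -/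
theorem stmt10_general (V E : Type) [Fintype E] [DecidableEq V]
    (s t : E → V) (ℓ : E → ℝ) (hℓ : ∀ e, 0 < ℓ e)
    (VD : Finset V)
    (hinc : ∀ w : V, ∃ e, s e = w ∨ t e = w)
    (ve ve' : E → ℝ → ℝ) (g : V → ℝ)
    (hder : ∀ e, ∀ x ∈ Set.Icc (0:ℝ) (ℓ e), HasDerivAt (ve e) (ve' e x) x)
    (hder2 : ∀ e, ∀ x ∈ Set.Icc (0:ℝ) (ℓ e), HasDerivAt (ve' e) (-1) x)
    (hs : ∀ e, ve e 0 = g (s e)) (ht : ∀ e, ve e (ℓ e) = g (t e))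
    (hDir : ∀ w ∈ VD, g w = 0)
    (hKir : ∀ w, w ∉ VD →
      (∑ e ∈ univ.filter (fun e => s e = w), ve' e 0)
        - (∑ e ∈ univ.filter (fun e => t e = w), ve' e (ℓ e)) = 0) :
    (∀ w ∈ VD, g w = 0) ∧
      ∀ w, w ∉ VD →
        (1 / ((∑ e ∈ univ.filter (fun e => s e = w), ℓ e) +
              (∑ e ∈ univ.filter (fun e => t e = w), ℓ e))) *
          ((∑ e ∈ univ.filter (fun e => s e = w), (g w - g (t e)) / ℓ e) +
           (∑ e ∈ univ.filter (fun e => t e = w), (g w - g (s e)) / ℓ e)) = 1 / 2 := by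
  refine ⟨hDir, fun w hw => ?_⟩
  have hout : ∀ e ∈ univ.filter (fun e => s e = w),
      (g w - g (t e)) / ℓ e = ℓ e / 2 - ve' e 0 := by
    intro e he
    rw [← (mem_filter.1 he).2, ← hs, ← ht]
    exact sub_div_eq_half_sub_deriv_left (hder e) (hder2 e) (hℓ e)
  have hin : ∀ e ∈ univ.filter (fun e => t e = w),
      (g w - g (s e)) / ℓ e = ve' e (ℓ e) + ℓ e / 2 := by
    intro e he
    rw [← (mem_filter.1 he).2, ← hs, ← ht]
    exact sub_div_eq_deriv_right_add_half (hder e) (hder2 e) (hℓ e)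
  have hdeg := sum_filter_add_sum_filter_pos hℓ (hinc w)
  rw [sum_congr rfl hout, sum_congr rfl hin, sum_sub_distrib, sum_add_distrib, ← sum_div,
    ← sum_div]
  field_simp
  linarith [hKir w hw]

/-- The restriction `g` of the torsion function of a metric graph to the vertex set satisfies
the discrete system: `g(v) = 0` at Dirichlet vertices, and
`(1/d_v^ℓ) Σ_{e={v,w}} (g(v)-g(w))/ℓ_e = 1/2` at natural vertices, where
`d_v^ℓ = Σ_{e ∋ v} ℓ_e`.  Edges are modelled by maps `s t : E → V` (an edge `e` is
identified with `[0, ℓ e]`, with `0` corresponding to `s e` and `ℓ e` to `t e`). -/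
theorem stmt10 (V E : Type) [Fintype V] [Fintype E] [DecidableEq V]
    (s t : E → V) (ℓ : E → ℝ) (hℓ : ∀ e, 0 < ℓ e)
    (VD : Finset V) (hVD : VD.Nonempty)
    (hinc : ∀ w : V, ∃ e, s e = w ∨ t e = w)
    (ve ve' : E → ℝ → ℝ) (g : V → ℝ)
    (hder : ∀ e, ∀ x ∈ Set.Icc (0:ℝ) (ℓ e), HasDerivAt (ve e) (ve' e x) x)
    (hder2 : ∀ e, ∀ x ∈ Set.Icc (0:ℝ) (ℓ e), HasDerivAt (ve' e) (-1) x)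
    (hs : ∀ e, ve e 0 = g (s e)) (ht : ∀ e, ve e (ℓ e) = g (t e))
    (hDir : ∀ w ∈ VD, g w = 0)
    (hKir : ∀ w, w ∉ VD →
      (∑ e ∈ univ.filter (fun e => s e = w), ve' e 0)
        - (∑ e ∈ univ.filter (fun e => t e = w), ve' e (ℓ e)) = 0) :
    (∀ w ∈ VD, g w = 0) ∧
      ∀ w, w ∉ VD →
        (1 / ((∑ e ∈ univ.filter (fun e => s e = w), ℓ e) +
              (∑ e ∈ univ.filter (fun e => t e = w), ℓ e))) *
          ((∑ e ∈ univ.filter (fun e => s e = w), (g w - g (t e)) / ℓ e) +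
           (∑ e ∈ univ.filter (fun e => t e = w), (g w - g (s e)) / ℓ e)) = 1 / 2 :=
  stmt10_general V E s t ℓ hℓ VD hinc ve ve' g hder hder2 hs ht hDir hKir
end

section
/- For any compact metric graph G, the torsional rigidity satisfies T(G) ≥ (1/12) Σ_e ℓ_e³, and consequently, by Jensen's inequality, T(G) ≥ |G|³/(12|E|²) where |E| is the number of edges. -/
open MeasureTheory Finset

/-- The set of Pólya quotients `(∫_G u)² / ∫_G (u')²` over admissible test functions
`u ∈ H¹₀(G; V_D)`; its supremum is the torsional rigidity `T(G)`. -/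
def polyaSet (V E : Type) [Fintype E] (s t : E → V) (ℓ : E → ℝ) (VD : Finset V) :
    Set ℝ :=
  { r | ∃ (u u' : E → ℝ → ℝ) (g : V → ℝ),
      (∀ e, ∀ x ∈ Set.Icc (0:ℝ) (ℓ e), HasDerivAt (u e) (u' e x) x) ∧
      (∀ e, ContinuousOn (u' e) (Set.Icc (0:ℝ) (ℓ e))) ∧
      (∀ e, u e 0 = g (s e)) ∧ (∀ e, u e (ℓ e) = g (t e)) ∧
      (∀ w ∈ VD, g w = 0) ∧
      0 < (∑ e, ∫ x in (0:ℝ)..(ℓ e), (u' e x) ^ 2) ∧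
      r = (∑ e, ∫ x in (0:ℝ)..(ℓ e), u e x) ^ 2 /
            (∑ e, ∫ x in (0:ℝ)..(ℓ e), (u' e x) ^ 2) }

private lemma torsion_int1 (a : ℝ) : ∫ x in (0:ℝ)..a, (a * x - x ^ 2) / 2 = a ^ 3 / 12 := by
  rw [intervalIntegral.integral_div,
    intervalIntegral.integral_sub
      (Continuous.intervalIntegrable (by fun_prop) _ _)
      (Continuous.intervalIntegrable (by fun_prop) _ _),
    intervalIntegral.integral_const_mul, integral_id, integral_pow]
  norm_num; ring

private lemma torsion_int2 (a : ℝ) : ∫ x in (0:ℝ)..a, ((a - 2 * x) / 2) ^ 2 = a ^ 3 / 12 := by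
  rw [intervalIntegral.integral_congr (g := fun x => a ^ 2 / 4 - a * x + x ^ 2)
    (fun x _ => by ring)]
  rw [intervalIntegral.integral_add
      (Continuous.intervalIntegrable (by fun_prop) _ _)
      (Continuous.intervalIntegrable (by fun_prop) _ _),
    intervalIntegral.integral_sub
      (Continuous.intervalIntegrable (by fun_prop) _ _)
      (Continuous.intervalIntegrable (by fun_prop) _ _),
    intervalIntegral.integral_const_mul, integral_id, integral_pow,
    intervalIntegral.integral_const]
  norm_num; ring

/-- Along a reflexive-transitive chain, the value of `g` grows by at most `M` per step. -/
private lemma chain_bound {V : Type} (step : V → V → Prop) (w v : V)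
    (h : Relation.ReflTransGen step w v) :
    ∃ n : ℕ, ∀ (g : V → ℝ) (M : ℝ),
      g w = 0 → (∀ a b, step a b → |g b - g a| ≤ M) → |g v| ≤ n * M := by
  induction h with
  | refl => exact ⟨0, fun g M hg _ => by simp [hg]⟩
  | @tail b c hab hbc ih =>
    obtain ⟨n, hn⟩ := ih
    refine ⟨n + 1, fun g M hg hstep => ?_⟩
    have h1 : |g c| ≤ |g c - g b| + |g b| := by
      have := abs_add_le (g c - g b) (g b); simpa using this
    have h2 := hstep _ _ hbc
    have h3 := hn g M hg hstep
    push_cast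
    linarith

/-- The edgewise torsion function shows `(∑ ℓ³)/12` is a Pólya quotient. -/
private lemma torsion_mem (V E : Type) [Fintype E] [Nonempty E]
    (s t : E → V) (ℓ : E → ℝ) (hℓ : ∀ e, 0 < ℓ e) (VD : Finset V) :
    (∑ e, (ℓ e) ^ 3) / 12 ∈ polyaSet V E s t ℓ VD := by
  refine ⟨fun e x => (ℓ e * x - x ^ 2) / 2, fun e x => (ℓ e - 2 * x) / 2, fun _ => 0,
    ?_, ?_, ?_, ?_, ?_, ?_, ?_⟩
  · intro e x _
    have h : HasDerivAt (fun x : ℝ => (ℓ e * x - x ^ 2) / 2)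
        ((ℓ e * 1 - 2 * x ^ 1) / 2) x :=
      (((hasDerivAt_id x).const_mul (ℓ e)).sub (hasDerivAt_pow 2 x)).div_const 2
    simpa using h
  · intro e; exact Continuous.continuousOn (by fun_prop)
  · intro e; simp
  · intro e; simp; ring
  · intro w _; rfl
  · have hpos : ∀ e : E, 0 < (ℓ e) ^ 3 / 12 := fun e => by have := hℓ e; positivity
    calc (0:ℝ) < ∑ e, (ℓ e) ^ 3 / 12 :=
          Finset.sum_pos (fun e _ => hpos e) Finset.univ_nonempty
      _ = _ := by
          refine Finset.sum_congr rfl fun e _ => ?_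
          rw [torsion_int2]
  · have h2 : (∑ e, ∫ x in (0:ℝ)..(ℓ e), ((ℓ e - 2 * x) / 2) ^ 2)
        = (∑ e, (ℓ e) ^ 3) / 12 := by
      rw [Finset.sum_div]
      exact Finset.sum_congr rfl fun e _ => torsion_int2 (ℓ e)
    have h1 : (∑ e, ∫ x in (0:ℝ)..(ℓ e), (ℓ e * x - x ^ 2) / 2)
        = (∑ e, (ℓ e) ^ 3) / 12 := by
      rw [Finset.sum_div]
      exact Finset.sum_congr rfl fun e _ => torsion_int1 (ℓ e)
    rw [h1, h2]
    have hpos : (0:ℝ) < (∑ e, (ℓ e) ^ 3) / 12 := by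
      have : ∀ e : E, (0:ℝ) < (ℓ e) ^ 3 := fun e => by have := hℓ e; positivity
      have := Finset.sum_pos (fun e (_ : e ∈ Finset.univ) => this e) Finset.univ_nonempty
      positivity
    rw [sq, mul_div_assoc, div_self hpos.ne', mul_one]

private lemma polya_bddAbove (V E : Type) [Fintype V] [Fintype E] [Nonempty E]
    (s t : E → V) (ℓ : E → ℝ) (hℓ : ∀ e, 0 < ℓ e)
    (VD : Finset V) (hVD : VD.Nonempty)
    (hconn : ∀ v w : V, Relation.ReflTransGen
      (fun a b => ∃ e, (s e = a ∧ t e = b) ∨ (s e = b ∧ t e = a)) v w) :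
    BddAbove (polyaSet V E s t ℓ VD) := by
  classical
  obtain ⟨w, hw⟩ := hVD
  set step : V → V → Prop := fun a b => ∃ e, (s e = a ∧ t e = b) ∨ (s e = b ∧ t e = a)
  choose n hn using fun v => chain_bound step w v (hconn w v)
  set N : ℕ := Finset.univ.sup n with hN
  set L : ℝ := ∑ e, ℓ e with hL
  have hL0 : 0 < L := Finset.sum_pos (fun e _ => hℓ e) Finset.univ_nonempty
  refine ⟨(L * ((N:ℝ) + 1) * ((L + 1) / 2)) ^ 2, fun r hr => ?_⟩
  obtain ⟨u, u', g, hderiv, hcont, hs, ht, hD0, hDpos, hreq⟩ := hr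
  set D : ℝ := ∑ e, ∫ x in (0:ℝ)..(ℓ e), (u' e x) ^ 2 with hD
  -- basic integrability
  have hInt : ∀ e, IntervalIntegrable (u' e) volume 0 (ℓ e) := fun e =>
    ContinuousOn.intervalIntegrable (by rw [Set.uIcc_of_le (hℓ e).le]; exact hcont e)
  have hIntAbs : ∀ e, IntervalIntegrable (fun x => |u' e x|) volume 0 (ℓ e) := fun e =>
    ContinuousOn.intervalIntegrable (by rw [Set.uIcc_of_le (hℓ e).le]; exact (hcont e).abs)
  have hIntSq : ∀ e, IntervalIntegrable (fun x => (u' e x) ^ 2) volume 0 (ℓ e) := fun e =>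
    ContinuousOn.intervalIntegrable
      (by rw [Set.uIcc_of_le (hℓ e).le]; exact (hcont e).pow 2)
  set M : ℝ := ∑ e, ∫ x in (0:ℝ)..(ℓ e), |u' e x| with hM
  have hMe : ∀ e : E, 0 ≤ ∫ x in (0:ℝ)..(ℓ e), |u' e x| := fun e =>
    intervalIntegral.integral_nonneg (hℓ e).le (fun x _ => abs_nonneg _)
  have hM0 : 0 ≤ M := Finset.sum_nonneg fun e _ => hMe e
  -- FTC on each full edge
  have hftc : ∀ e, ∫ x in (0:ℝ)..(ℓ e), u' e x = u e (ℓ e) - u e 0 := by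
    intro e
    refine intervalIntegral.integral_eq_sub_of_hasDerivAt ?_ (hInt e)
    intro x hx
    exact hderiv e x (by rwa [Set.uIcc_of_le (hℓ e).le] at hx)
  -- each step changes g by at most M
  have hstep : ∀ a b, step a b → |g b - g a| ≤ M := by
    intro a b hab
    obtain ⟨e, he⟩ := hab
    have key : |g (t e) - g (s e)| ≤ M := by
      rw [← hs e, ← ht e, ← hftc e]
      calc |∫ x in (0:ℝ)..(ℓ e), u' e x| ≤ ∫ x in (0:ℝ)..(ℓ e), |u' e x| :=
            intervalIntegral.abs_integral_le_integral_abs (hℓ e).le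
        _ ≤ M := Finset.single_le_sum (fun e (_ : e ∈ Finset.univ) => hMe e)
              (Finset.mem_univ e)
    rcases he with ⟨h1, h2⟩ | ⟨h1, h2⟩
    · rwa [h1, h2] at key
    · rw [h1, h2] at key; rwa [abs_sub_comm] at key
  have hgw : g w = 0 := hD0 w hw
  -- vertex values bounded
  have hgv : ∀ v, |g v| ≤ (N : ℝ) * M := by
    intro v
    have := hn v g M hgw hstep
    have hnv : ((n v : ℝ)) ≤ (N : ℝ) := by
      exact_mod_cast Finset.le_sup (Finset.mem_univ v)
    calc |g v| ≤ (n v : ℝ) * M := this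
      _ ≤ (N : ℝ) * M := by nlinarith
  -- pointwise bound on u
  have hu : ∀ e, ∀ x ∈ Set.Icc (0:ℝ) (ℓ e), |u e x| ≤ ((N:ℝ) + 1) * M := by
    intro e x hx
    have hsub : Set.Icc (0:ℝ) x ⊆ Set.Icc (0:ℝ) (ℓ e) := Set.Icc_subset_Icc le_rfl hx.2
    have hftc2 : ∫ y in (0:ℝ)..x, u' e y = u e x - u e 0 := by
      refine intervalIntegral.integral_eq_sub_of_hasDerivAt ?_ ?_
      · intro y hy
        exact hderiv e y (hsub (by rwa [Set.uIcc_of_le hx.1] at hy))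
      · exact ContinuousOn.intervalIntegrable
          (by rw [Set.uIcc_of_le hx.1]; exact (hcont e).mono hsub)
    have h1 : |∫ y in (0:ℝ)..x, u' e y| ≤ M := by
      calc |∫ y in (0:ℝ)..x, u' e y| ≤ ∫ y in (0:ℝ)..x, |u' e y| :=
            intervalIntegral.abs_integral_le_integral_abs hx.1
        _ ≤ ∫ y in (0:ℝ)..(ℓ e), |u' e y| := by
            refine intervalIntegral.integral_mono_interval le_rfl hx.1 hx.2 ?_ (hIntAbs e)
            filter_upwards with y using abs_nonneg _
        _ ≤ M := Finset.single_le_sum (fun e (_ : e ∈ Finset.univ) => hMe e)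
              (Finset.mem_univ e)
    have h2 : |u e 0| ≤ (N:ℝ) * M := by rw [hs e]; exact hgv (s e)
    have : u e x = (u e x - u e 0) + u e 0 := by ring
    rw [this, ← hftc2]
    calc |(∫ y in (0:ℝ)..x, u' e y) + u e 0|
        ≤ |∫ y in (0:ℝ)..x, u' e y| + |u e 0| := abs_add_le _ _
      _ ≤ M + (N:ℝ) * M := add_le_add h1 h2
      _ = ((N:ℝ) + 1) * M := by ring
  -- numerator bound
  have hnum : |∑ e, ∫ x in (0:ℝ)..(ℓ e), u e x| ≤ L * (((N:ℝ) + 1) * M) := by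
    calc |∑ e, ∫ x in (0:ℝ)..(ℓ e), u e x|
        ≤ ∑ e, |∫ x in (0:ℝ)..(ℓ e), u e x| := Finset.abs_sum_le_sum_abs _ _
      _ ≤ ∑ e, (((N:ℝ) + 1) * M) * ℓ e := by
          refine Finset.sum_le_sum fun e _ => ?_
          have := intervalIntegral.norm_integral_le_of_norm_le_const
            (C := ((N:ℝ) + 1) * M) (f := u e) (a := (0:ℝ)) (b := ℓ e) ?_
          · rw [Real.norm_eq_abs] at this
            calc |∫ x in (0:ℝ)..(ℓ e), u e x| ≤ (((N:ℝ)+1) * M) * |ℓ e - 0| := this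
              _ = (((N:ℝ)+1) * M) * ℓ e := by
                  rw [sub_zero, abs_of_pos (hℓ e)]
          · intro x hx
            rw [Set.uIoc_of_le (hℓ e).le] at hx
            exact hu e x ⟨hx.1.le, hx.2⟩
      _ = L * (((N:ℝ) + 1) * M) := by rw [← Finset.mul_sum, ← hL]; ring
  -- scaling: let lam = 1/√D
  set lam : ℝ := (Real.sqrt D)⁻¹ with hlam
  have hDpos' : 0 < D := hDpos
  have hlam0 : 0 < lam := by
    rw [hlam]; exact inv_pos.mpr (Real.sqrt_pos.mpr hDpos')
  have hlamD : lam ^ 2 * D = 1 := by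
    rw [hlam, inv_pow, Real.sq_sqrt hDpos'.le]
    field_simp
  -- lam * M ≤ (L + 1) / 2
  have hlamM : lam * M ≤ (L + 1) / 2 := by
    have hedge : ∀ e : E, lam * ∫ x in (0:ℝ)..(ℓ e), |u' e x|
        ≤ (ℓ e + lam ^ 2 * ∫ x in (0:ℝ)..(ℓ e), (u' e x) ^ 2) / 2 := by
      intro e
      have h1 : lam * ∫ x in (0:ℝ)..(ℓ e), |u' e x|
          = ∫ x in (0:ℝ)..(ℓ e), lam * |u' e x| := by
        rw [intervalIntegral.integral_const_mul]
      have h2 : (∫ x in (0:ℝ)..(ℓ e), lam * |u' e x|)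
          ≤ ∫ x in (0:ℝ)..(ℓ e), (1 + lam ^ 2 * (u' e x) ^ 2) / 2 := by
        refine intervalIntegral.integral_mono_on (hℓ e).le
          ((hIntAbs e).const_mul lam) ?_ ?_
        · have : IntervalIntegrable (fun x => (u' e x) ^ 2) volume 0 (ℓ e) := hIntSq e
          apply IntervalIntegrable.div_const
          exact (intervalIntegrable_const.add (this.const_mul _))
        · intro x _
          nlinarith [sq_nonneg (1 - lam * |u' e x|), sq_abs (u' e x), abs_nonneg (u' e x),
            hlam0.le]
      have h3 : (∫ x in (0:ℝ)..(ℓ e), (1 + lam ^ 2 * (u' e x) ^ 2) / 2)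
          = (ℓ e + lam ^ 2 * ∫ x in (0:ℝ)..(ℓ e), (u' e x) ^ 2) / 2 := by
        rw [intervalIntegral.integral_div,
          intervalIntegral.integral_add intervalIntegrable_const ((hIntSq e).const_mul _),
          intervalIntegral.integral_const, intervalIntegral.integral_const_mul]
        simp
      rw [h1]; rw [← h3] at *; exact h2.trans_eq h3
    calc lam * M = ∑ e, lam * ∫ x in (0:ℝ)..(ℓ e), |u' e x| := by
          rw [hM, Finset.mul_sum]
      _ ≤ ∑ e, (ℓ e + lam ^ 2 * ∫ x in (0:ℝ)..(ℓ e), (u' e x) ^ 2) / 2 :=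
          Finset.sum_le_sum fun e _ => hedge e
      _ = (L + lam ^ 2 * D) / 2 := by
          rw [← Finset.sum_div, Finset.sum_add_distrib, ← Finset.mul_sum, hL, hD]
      _ = (L + 1) / 2 := by rw [hlamD]
  -- put it together
  set X : ℝ := ∑ e, ∫ x in (0:ℝ)..(ℓ e), u e x with hX
  have hfinal : X ^ 2 ≤ (L * ((N:ℝ) + 1) * ((L + 1) / 2)) ^ 2 * D := by
    have hX2 : X ^ 2 ≤ (L * (((N:ℝ) + 1) * M)) ^ 2 := by
      have h := hnum
      have habs : X ^ 2 = |X| ^ 2 := (sq_abs X).symm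
      rw [habs]
      have h0 : (0:ℝ) ≤ |X| := abs_nonneg _
      nlinarith
    have hM2 : M ^ 2 ≤ ((L + 1) / 2) ^ 2 * D := by
      have h := hlamM
      have h2 : (lam * M) ^ 2 ≤ ((L + 1) / 2) ^ 2 :=
        pow_le_pow_left₀ (mul_nonneg hlam0.le hM0) h 2
      have h3 : (lam * M) ^ 2 = lam ^ 2 * M ^ 2 := by ring
      rw [h3] at h2
      have h4 : lam ^ 2 * M ^ 2 * D ≤ ((L + 1) / 2) ^ 2 * D := by nlinarith
      have h5 : lam ^ 2 * M ^ 2 * D = (lam ^ 2 * D) * M ^ 2 := by ring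
      rw [h5, hlamD, one_mul] at h4
      exact h4
    have hNM : (0:ℝ) ≤ L * (((N:ℝ) + 1)) := by positivity
    calc X ^ 2 ≤ (L * (((N:ℝ) + 1) * M)) ^ 2 := hX2
      _ = (L * ((N:ℝ) + 1)) ^ 2 * M ^ 2 := by ring
      _ ≤ (L * ((N:ℝ) + 1)) ^ 2 * (((L + 1) / 2) ^ 2 * D) := by nlinarith
      _ = (L * ((N:ℝ) + 1) * ((L + 1) / 2)) ^ 2 * D := by ring
  rw [hreq]
  rw [div_le_iff₀ hDpos']
  exact hfinal

/-- Lower bounds for the torsional rigidity: `T(G) ≥ (1/12) Σ_e ℓ_e³` and, by Jensen's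
inequality, `T(G) ≥ |G|³/(12 |E|²)`. -/
theorem stmt16 (V E : Type) [Fintype V] [Fintype E] [DecidableEq V] [Nonempty E]
    (s t : E → V) (ℓ : E → ℝ) (hℓ : ∀ e, 0 < ℓ e)
    (VD : Finset V) (hVD : VD.Nonempty)
    (hconn : ∀ v w : V, Relation.ReflTransGen
      (fun a b => ∃ e, (s e = a ∧ t e = b) ∨ (s e = b ∧ t e = a)) v w) :
    (∑ e, (ℓ e) ^ 3) / 12 ≤ sSup (polyaSet V E s t ℓ VD) ∧
      (∑ e, ℓ e) ^ 3 / (12 * (Fintype.card E : ℝ) ^ 2) ≤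
        sSup (polyaSet V E s t ℓ VD) := by
  have hbdd := polya_bddAbove V E s t ℓ hℓ VD hVD hconn
  have hmem := torsion_mem V E s t ℓ hℓ VD
  have h1 : (∑ e, (ℓ e) ^ 3) / 12 ≤ sSup (polyaSet V E s t ℓ VD) :=
    le_csSup hbdd hmem
  refine ⟨h1, le_trans ?_ h1⟩
  -- Jensen: (∑ ℓ)³ / card² ≤ ∑ ℓ³
  have hj := pow_sum_div_card_le_sum_pow
    (f := ℓ) (s := Finset.univ) (fun e _ => (hℓ e).le) 2
  have hcard : (0:ℝ) < (Fintype.card E : ℝ) := by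
    have : 0 < Fintype.card E := Fintype.card_pos
    exact_mod_cast this
  have hj' : (∑ e, ℓ e) ^ 3 ≤ (Fintype.card E : ℝ) ^ 2 * ∑ e, (ℓ e) ^ 3 := by
    rw [div_le_iff₀ (by positivity)] at hj
    norm_num at hj
    calc (∑ e, ℓ e) ^ 3 ≤ (∑ e, (ℓ e) ^ 3) * ((Finset.univ : Finset E).card : ℝ) ^ 2 := hj
      _ = (Fintype.card E : ℝ) ^ 2 * ∑ e, (ℓ e) ^ 3 := by
          rw [Finset.card_univ]; ring
  rw [div_le_div_iff₀ (by positivity) (by norm_num)]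
  nlinarith [hj']
end

section
/- For any compact connected metric graph G with nonempty Dirichlet vertex set, the product of the ground-state energy λ₁(G) and the torsional rigidity T(G) is strictly less than the total length |G|. -/
/-
Instead of constructing the torsion function we prove a uniform gap. Let `λ = λ₁(G) > 0` and let
`e₀` be an edge at a Dirichlet vertex `w`. For an admissible `u`, cut `∫_G u` into the integral
over the piece of `e₀` of length `δ` at `w`, and the rest. Since `u (w) = 0`, the first piece
satisfies the Poincaré-type bound `(∫ u)² ≤ δ³ ∫_G u'²`, while Cauchy–Schwarz bounds the square of
the second by `(|G| - δ) ∫_G u²`. With `λ ∫_G u² ≤ ∫_G u'²` and Young's inequality this gives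
`λ (∫_G u)² ≤ (|G| - δ/4) ∫_G u'²` as soon as `12 λ |G| δ ≤ 1`, so `λ T(G) ≤ |G| - δ/4`.
-/
open MeasureTheory Finset

/-- The set of Rayleigh quotients `∫_G (u')² / ∫_G u²` over admissible nonzero test
functions `u ∈ H¹₀(G; V_D)`; its infimum is the ground-state energy `λ₁(G)`. -/
def rayleighSet (V E : Type) [Fintype E] (s t : E → V) (ℓ : E → ℝ) (VD : Finset V) :
    Set ℝ :=
  { r | ∃ (u u' : E → ℝ → ℝ) (g : V → ℝ),
      (∀ e, ∀ x ∈ Set.Icc (0:ℝ) (ℓ e), HasDerivAt (u e) (u' e x) x) ∧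
      (∀ e, ContinuousOn (u' e) (Set.Icc (0:ℝ) (ℓ e))) ∧
      (∀ e, u e 0 = g (s e)) ∧ (∀ e, u e (ℓ e) = g (t e)) ∧
      (∀ w ∈ VD, g w = 0) ∧
      0 < (∑ e, ∫ x in (0:ℝ)..(ℓ e), (u e x) ^ 2) ∧
      r = (∑ e, ∫ x in (0:ℝ)..(ℓ e), (u' e x) ^ 2) /
            (∑ e, ∫ x in (0:ℝ)..(ℓ e), (u e x) ^ 2) }

theorem sq_integral_le_mul_integral_sq {f : ℝ → ℝ} {a b : ℝ} (hab : a ≤ b)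
    (hf : ContinuousOn f (Set.Icc a b)) :
    (∫ x in a..b, f x) ^ 2 ≤ (b - a) * ∫ x in a..b, f x ^ 2 := by
  have hfi : IntervalIntegrable f volume a b := hf.intervalIntegrable_of_Icc hab
  have hf2i : IntervalIntegrable (fun x => f x ^ 2) volume a b :=
    (hf.pow 2).intervalIntegrable_of_Icc hab
  obtain ⟨I, hI⟩ : ∃ I, ∫ x in a..b, f x = I := ⟨_, rfl⟩
  obtain ⟨J, hJ⟩ : ∃ J, ∫ x in a..b, f x ^ 2 = J := ⟨_, rfl⟩
  -- the integrand is `((b - a) f - I)²` expanded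
  have hexpand : ∫ x in a..b, ((b - a) ^ 2 * f x ^ 2 - 2 * (b - a) * I * f x + I ^ 2)
      = (b - a) * ((b - a) * J - I ^ 2) := by
    rw [intervalIntegral.integral_add ((hf2i.const_mul _).sub (hfi.const_mul _))
        intervalIntegrable_const,
      intervalIntegral.integral_sub (hf2i.const_mul _) (hfi.const_mul _),
      intervalIntegral.integral_const_mul, intervalIntegral.integral_const_mul,
      intervalIntegral.integral_const, smul_eq_mul, hI, hJ]
    ring
  have hnonneg : 0 ≤ ∫ x in a..b, ((b - a) ^ 2 * f x ^ 2 - 2 * (b - a) * I * f x + I ^ 2) :=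
    intervalIntegral.integral_nonneg hab fun x _ => by nlinarith [sq_nonneg ((b - a) * f x - I)]
  rw [hI, hJ]
  rcases hab.eq_or_lt with rfl | hlt
  · simp [← hI]
  · rw [hexpand] at hnonneg
    exact sub_nonneg.1 (nonneg_of_mul_nonneg_right hnonneg (sub_pos.2 hlt))

theorem integral_sq_mono_interval {f : ℝ → ℝ} {a b c d : ℝ} (hac : a ≤ c) (hcd : c ≤ d)
    (hdb : d ≤ b) (hf : ContinuousOn f (Set.Icc a b)) :
    ∫ x in c..d, f x ^ 2 ≤ ∫ x in a..b, f x ^ 2 :=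
  intervalIntegral.integral_mono_interval hac hcd hdb
    (Filter.Eventually.of_forall fun x => sq_nonneg (f x))
    ((hf.pow 2).intervalIntegrable_of_Icc (hac.trans (hcd.trans hdb)))

section Poincare

variable {u u' : ℝ → ℝ} {a b : ℝ}

theorem sq_le_mul_integral_deriv_sq (hu : ∀ x ∈ Set.Icc a b, HasDerivAt u (u' x) x)
    (hu' : ContinuousOn u' (Set.Icc a b)) (h0 : u a = 0 ∨ u b = 0) {y : ℝ}
    (hy : y ∈ Set.Icc a b) :
    u y ^ 2 ≤ (b - a) * ∫ x in a..b, u' x ^ 2 := by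
  obtain ⟨hay, hyb⟩ := hy
  rcases h0 with h0 | h0
  · have hsub : Set.Icc a y ⊆ Set.Icc a b := Set.Icc_subset_Icc le_rfl hyb
    have hftc : ∫ x in a..y, u' x = u y := by
      rw [intervalIntegral.integral_eq_sub_of_hasDerivAt
        (fun x hx => hu x (hsub (Set.uIcc_of_le hay ▸ hx)))
        ((hu'.mono hsub).intervalIntegrable_of_Icc hay), h0, sub_zero]
    calc u y ^ 2 ≤ (y - a) * ∫ x in a..y, u' x ^ 2 :=
          hftc ▸ sq_integral_le_mul_integral_sq hay (hu'.mono hsub)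
      _ ≤ (b - a) * ∫ x in a..b, u' x ^ 2 :=
          mul_le_mul (by linarith) (integral_sq_mono_interval le_rfl hay hyb hu')
            (intervalIntegral.integral_nonneg hay fun x _ => sq_nonneg _) (by linarith)
  · have hsub : Set.Icc y b ⊆ Set.Icc a b := Set.Icc_subset_Icc hay le_rfl
    have hftc : ∫ x in y..b, u' x = -u y := by
      rw [intervalIntegral.integral_eq_sub_of_hasDerivAt
        (fun x hx => hu x (hsub (Set.uIcc_of_le hyb ▸ hx)))
        ((hu'.mono hsub).intervalIntegrable_of_Icc hyb), h0, zero_sub]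
    calc u y ^ 2 = (∫ x in y..b, u' x) ^ 2 := by rw [hftc, neg_sq]
      _ ≤ (b - y) * ∫ x in y..b, u' x ^ 2 := sq_integral_le_mul_integral_sq hyb (hu'.mono hsub)
      _ ≤ (b - a) * ∫ x in a..b, u' x ^ 2 :=
          mul_le_mul (by linarith) (integral_sq_mono_interval hay hyb le_rfl hu')
            (intervalIntegral.integral_nonneg hyb fun x _ => sq_nonneg _) (by linarith)

theorem sq_integral_le_cube_mul_integral_deriv_sq (hab : a ≤ b)
    (hu : ∀ x ∈ Set.Icc a b, HasDerivAt u (u' x) x) (hu' : ContinuousOn u' (Set.Icc a b))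
    (h0 : u a = 0 ∨ u b = 0) :
    (∫ x in a..b, u x) ^ 2 ≤ (b - a) ^ 3 * ∫ x in a..b, u' x ^ 2 := by
  have hucont : ContinuousOn u (Set.Icc a b) := 
    continuousOn_of_forall_continuousAt fun x hx => (hu x hx).continuousAt
  have hmass : ∫ x in a..b, u x ^ 2 ≤ (b - a) * ((b - a) * ∫ x in a..b, u' x ^ 2) := by
    calc ∫ x in a..b, u x ^ 2 ≤ ∫ x in a..b, (b - a) * ∫ x in a..b, u' x ^ 2 :=
          intervalIntegral.integral_mono_on hab ((hucont.pow 2).intervalIntegrable_of_Icc hab)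
            intervalIntegrable_const fun y hy => sq_le_mul_integral_deriv_sq hu hu' h0 hy
      _ = _ := by rw [intervalIntegral.integral_const, smul_eq_mul]
  calc (∫ x in a..b, u x) ^ 2 ≤ (b - a) * ∫ x in a..b, u x ^ 2 :=
        sq_integral_le_mul_integral_sq hab hucont
    _ ≤ (b - a) * ((b - a) * ((b - a) * ∫ x in a..b, u' x ^ 2)) :=
          mul_le_mul_of_nonneg_left hmass (sub_nonneg.2 hab)
    _ = (b - a) ^ 3 * ∫ x in a..b, u' x ^ 2 := by ring

end Poincare

theorem exists_integral_eq_add_of_eq_zero {u u' : ℝ → ℝ} {a b δ : ℝ} (hδ : 0 ≤ δ)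
    (hδab : δ ≤ b - a) (hu : ∀ x ∈ Set.Icc a b, HasDerivAt u (u' x) x)
    (hu' : ContinuousOn u' (Set.Icc a b)) (h0 : u a = 0 ∨ u b = 0) :
    ∃ A B, ∫ x in a..b, u x = A + B ∧ A ^ 2 ≤ δ ^ 3 * ∫ x in a..b, u' x ^ 2 ∧
      B ^ 2 ≤ (b - a - δ) * ∫ x in a..b, u x ^ 2 := by
  have hucont : ContinuousOn u (Set.Icc a b) := 
    continuousOn_of_forall_continuousAt fun x hx => (hu x hx).continuousAt
  have hui : ∀ c d, a ≤ c → c ≤ d → d ≤ b → IntervalIntegrable u volume c d :=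
    fun c d hac hcd hdb => (hucont.mono (Set.Icc_subset_Icc hac hdb)).intervalIntegrable_of_Icc hcd
  have hnear : ∀ c d, a ≤ c → c ≤ d → d ≤ b → d - c ≤ δ → (u c = 0 ∨ u d = 0) →
      (∫ x in c..d, u x) ^ 2 ≤ δ ^ 3 * ∫ x in a..b, u' x ^ 2 := by
    intro c d hac hcd hdb hδcd h0
    have hsub : Set.Icc c d ⊆ Set.Icc a b := Set.Icc_subset_Icc hac hdb
    calc (∫ x in c..d, u x) ^ 2 ≤ (d - c) ^ 3 * ∫ x in c..d, u' x ^ 2 :=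
          sq_integral_le_cube_mul_integral_deriv_sq hcd (fun x hx => hu x (hsub hx))
            (hu'.mono hsub) h0
      _ ≤ δ ^ 3 * ∫ x in a..b, u' x ^ 2 :=
          mul_le_mul (pow_le_pow_left₀ (sub_nonneg.2 hcd) hδcd 3)
            (integral_sq_mono_interval hac hcd hdb hu')
            (intervalIntegral.integral_nonneg hcd fun x _ => sq_nonneg _) (by positivity)
  have hfar : ∀ c d, a ≤ c → c ≤ d → d ≤ b →
      (∫ x in c..d, u x) ^ 2 ≤ (d - c) * ∫ x in a..b, u x ^ 2 := fun c d hac hcd hdb =>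
    (sq_integral_le_mul_integral_sq hcd (hucont.mono (Set.Icc_subset_Icc hac hdb))).trans
      (mul_le_mul_of_nonneg_left (integral_sq_mono_interval hac hcd hdb hucont)
        (sub_nonneg.2 hcd))
  rcases h0 with h0 | h0
  · refine ⟨∫ x in a..a + δ, u x, ∫ x in a + δ..b, u x,
      (intervalIntegral.integral_add_adjacent_intervals
        (hui a (a + δ) le_rfl (by linarith) (by linarith))
        (hui (a + δ) b (by linarith) (by linarith) le_rfl)).symm,
      hnear _ _ le_rfl (by linarith) (by linarith) (by linarith) (Or.inl h0), ?_⟩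
    exact (hfar (a + δ) b (by linarith) (by linarith) le_rfl).trans_eq (by ring)
  · refine ⟨∫ x in b - δ..b, u x, ∫ x in a..b - δ, u x,
      ((intervalIntegral.integral_add_adjacent_intervals
        (hui a (b - δ) le_rfl (by linarith) (by linarith))
        (hui (b - δ) b (by linarith) (by linarith) le_rfl)).symm.trans (add_comm _ _)),
      hnear _ _ (by linarith) (by linarith) le_rfl (by linarith) (Or.inr h0), ?_⟩
    exact (hfar a (b - δ) le_rfl (by linarith) (by linarith)).trans_eq (by ring)

theorem exists_sum_integral_eq_add_of_eq_zero {E : Type*} [Fintype E] {ℓ : E → ℝ}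
    (hℓ : ∀ e, 0 ≤ ℓ e) {u u' : E → ℝ → ℝ}
    (hu : ∀ e, ∀ x ∈ Set.Icc 0 (ℓ e), HasDerivAt (u e) (u' e x) x)
    (hu' : ∀ e, ContinuousOn (u' e) (Set.Icc 0 (ℓ e))) {e₀ : E}
    (h0 : u e₀ 0 = 0 ∨ u e₀ (ℓ e₀) = 0) {δ : ℝ} (hδ : 0 ≤ δ) (hδℓ : δ ≤ ℓ e₀) :
    ∃ A B, ∑ e, ∫ x in 0..ℓ e, u e x = A + B ∧
      A ^ 2 ≤ δ ^ 3 * ∑ e, ∫ x in 0..ℓ e, u' e x ^ 2 ∧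
      B ^ 2 ≤ (∑ e, ℓ e - δ) * ∑ e, ∫ x in 0..ℓ e, u e x ^ 2 := by
  classical
  have hedge : ∀ e, ∃ A B, ∫ x in 0..ℓ e, u e x = A + B ∧
      A ^ 2 ≤ (if e = e₀ then δ ^ 3 else 0) * ∫ x in 0..ℓ e, u' e x ^ 2 ∧
      B ^ 2 ≤ (ℓ e - if e = e₀ then δ else 0) * ∫ x in 0..ℓ e, u e x ^ 2 := by
    intro e
    by_cases he : e = e₀
    · subst he
      simpa using exists_integral_eq_add_of_eq_zero hδ (by simpa using hδℓ) (hu e) (hu' e) h0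
    · refine ⟨0, _, (zero_add _).symm, by simp [he], ?_⟩
      simpa [he] using sq_integral_le_mul_integral_sq (hℓ e)
        (continuousOn_of_forall_continuousAt fun x hx => (hu e x hx).continuousAt)
  choose A B hAB hA hB using hedge
  refine ⟨∑ e, A e, ∑ e, B e, ?_, ?_, ?_⟩
  · rw [← Finset.sum_add_distrib]
    exact Finset.sum_congr rfl fun e _ => hAB e
  · have h := Finset.sum_sq_le_sum_mul_sum_of_sq_le_mul Finset.univ
      (fun e _ => by positivity)
      (fun e _ => intervalIntegral.integral_nonneg (hℓ e) fun x _ => sq_nonneg (u' e x))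
      (fun e _ => hA e)
    simpa using h
  · have h := Finset.sum_sq_le_sum_mul_sum_of_sq_le_mul Finset.univ
      (fun e _ => by split_ifs with he <;> [exact he ▸ sub_nonneg.2 hδℓ; simpa using hℓ e])
      (fun e _ => intervalIntegral.integral_nonneg (hℓ e) fun x _ => sq_nonneg (u e x))
      (fun e _ => hB e)
    simpa [Finset.sum_sub_distrib] using h

theorem mul_sq_add_le {lam A B M D L δ : ℝ} (hlam : 0 ≤ lam) (hδ : 0 < δ) (hδL : δ ≤ L)
    (hsmall : 12 * lam * L * δ ≤ 1) (hA : A ^ 2 ≤ δ ^ 3 * D) (hB : B ^ 2 ≤ (L - δ) * M)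
    (hM : lam * M ≤ D) :
    lam * (A + B) ^ 2 ≤ (L - δ / 4) * D := by
  have hL : 0 < L := hδ.trans_le hδL
  have hD : 0 ≤ D := nonneg_of_mul_nonneg_right ((sq_nonneg A).trans hA) (by positivity)
  -- Young's inequality `2AB ≤ (2L/δ) A² + (δ/2L) B²`, cleared of denominators
  have hyoung : lam * (4 * L * δ * (A * B)) ≤ lam * (4 * L ^ 2 * A ^ 2 + δ ^ 2 * B ^ 2) :=
    mul_le_mul_of_nonneg_left (by nlinarith [sq_nonneg (2 * L * A - δ * B)]) hlam
  have hAD : lam * A ^ 2 * (12 * L) ≤ δ ^ 2 * D := by nlinarith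
  have hBD : lam * B ^ 2 ≤ (L - δ) * D := by nlinarith
  have hA' : lam * A ^ 2 * (12 * L) * (δ + 2 * L) ≤ δ ^ 2 * D * (δ + 2 * L) :=
    mul_le_mul_of_nonneg_right hAD (by positivity)
  have hB' : lam * B ^ 2 * (4 * L * δ + 2 * δ ^ 2) ≤ (L - δ) * D * (4 * L * δ + 2 * δ ^ 2) :=
    mul_le_mul_of_nonneg_right hBD (by positivity)
  have hδD : 0 ≤ (L - δ) * (δ ^ 2 * D) := mul_nonneg (by linarith) (by positivity)
  have key : 4 * L * δ * (lam * (A + B) ^ 2) ≤ 4 * L * δ * ((L - δ / 4) * D) := by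
    linarith [mul_nonneg (pow_pos hδ 3).le hD]
  exact le_of_mul_le_mul_left key (by positivity)

theorem exists_incident_edge {V E : Type*} [Nonempty E] (s t : E → V) (w : V)
    (hconn : ∀ v v' : V, Relation.ReflTransGen
      (fun a b => ∃ e, (s e = a ∧ t e = b) ∨ (s e = b ∧ t e = a)) v v') :
    ∃ e, s e = w ∨ t e = w := by
  obtain ⟨e⟩ := ‹Nonempty E›
  rcases (hconn w (s e)).cases_head with h | ⟨c, ⟨e', ⟨hs, -⟩ | ⟨-, ht⟩⟩, -⟩
  · exact ⟨e, Or.inl h.symm⟩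
  · exact ⟨e', Or.inl hs⟩
  · exact ⟨e', Or.inr ht⟩

section Quotients

variable {V E : Type} [Fintype E] {s t : E → V} {ℓ : E → ℝ} {VD : Finset V}

theorem nonneg_of_mem_rayleighSet (hℓ : ∀ e, 0 ≤ ℓ e) {r : ℝ}
    (hr : r ∈ rayleighSet V E s t ℓ VD) : 0 ≤ r := by
  obtain ⟨u, u', g, -, -, -, -, -, hM, rfl⟩ := hr
  exact div_nonneg (Finset.sum_nonneg fun e _ =>
    intervalIntegral.integral_nonneg (hℓ e) fun x _ => sq_nonneg _) hM.le

theorem sInf_rayleighSet_nonneg (hℓ : ∀ e, 0 ≤ ℓ e) : 0 ≤ sInf (rayleighSet V E s t ℓ VD) :=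
  Real.sInf_nonneg fun _ => nonneg_of_mem_rayleighSet hℓ

theorem sInf_rayleighSet_mul_le (hℓ : ∀ e, 0 ≤ ℓ e) {u u' : E → ℝ → ℝ} {g : V → ℝ}
    (hu : ∀ e, ∀ x ∈ Set.Icc (0:ℝ) (ℓ e), HasDerivAt (u e) (u' e x) x)
    (hu' : ∀ e, ContinuousOn (u' e) (Set.Icc (0:ℝ) (ℓ e)))
    (hs : ∀ e, u e 0 = g (s e)) (ht : ∀ e, u e (ℓ e) = g (t e)) (hg : ∀ w ∈ VD, g w = 0) :
    sInf (rayleighSet V E s t ℓ VD) * ∑ e, ∫ x in (0:ℝ)..(ℓ e), (u e x) ^ 2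
      ≤ ∑ e, ∫ x in (0:ℝ)..(ℓ e), (u' e x) ^ 2 := by
  have hbdd : BddBelow (rayleighSet V E s t ℓ VD) :=
    ⟨0, fun _ => nonneg_of_mem_rayleighSet hℓ⟩
  rcases (Finset.sum_nonneg fun e _ => intervalIntegral.integral_nonneg (hℓ e)
    fun x _ => sq_nonneg (u e x)).eq_or_lt with hM | hM
  · rw [← hM, mul_zero]
    exact Finset.sum_nonneg fun e _ =>
      intervalIntegral.integral_nonneg (hℓ e) fun x _ => sq_nonneg _
  · exact (le_div_iff₀ hM).1 (csInf_le hbdd ⟨u, u', g, hu, hu', hs, ht, hg, hM, rfl⟩)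

theorem sInf_rayleighSet_mul_le_of_mem_polyaSet (hℓ : ∀ e, 0 ≤ ℓ e) {w : V} (hw : w ∈ VD)
    {e₀ : E} (he₀ : s e₀ = w ∨ t e₀ = w) {δ : ℝ} (hδ : 0 < δ) (hδℓ : δ ≤ ℓ e₀)
    (hsmall : 12 * sInf (rayleighSet V E s t ℓ VD) * (∑ e, ℓ e) * δ ≤ 1)
    {r : ℝ} (hr : r ∈ polyaSet V E s t ℓ VD) :
    sInf (rayleighSet V E s t ℓ VD) * r ≤ ∑ e, ℓ e - δ / 4 := by
  obtain ⟨u, u', g, hu, hu', hs, ht, hg, hD, rfl⟩ := hr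
  have h0 : u e₀ 0 = 0 ∨ u e₀ (ℓ e₀) = 0 := by
    rcases he₀ with he₀ | he₀
    · exact Or.inl (by rw [hs, he₀, hg w hw])
    · exact Or.inr (by rw [ht, he₀, hg w hw])
  obtain ⟨A, B, hAB, hA, hB⟩ :=
    exists_sum_integral_eq_add_of_eq_zero hℓ hu hu' h0 hδ.le hδℓ
  rw [hAB, ← mul_div_assoc, div_le_iff₀ hD]
  exact mul_sq_add_le (sInf_rayleighSet_nonneg hℓ) hδ
    (hδℓ.trans (Finset.single_le_sum (fun e _ => hℓ e) (Finset.mem_univ e₀))) hsmall hA hB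
    (sInf_rayleighSet_mul_le hℓ hu hu' hs ht hg)

end Quotients

theorem stmt17_general (V E : Type) [Fintype E] [Nonempty E]
    (s t : E → V) (ℓ : E → ℝ) (hℓ : ∀ e, 0 < ℓ e)
    (VD : Finset V) (hVD : VD.Nonempty)
    (hconn : ∀ v w : V, Relation.ReflTransGen
      (fun a b => ∃ e, (s e = a ∧ t e = b) ∨ (s e = b ∧ t e = a)) v w) :
    sInf (rayleighSet V E s t ℓ VD) * sSup (polyaSet V E s t ℓ VD) < ∑ e, ℓ e := by
  set lam := sInf (rayleighSet V E s t ℓ VD)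
  set L := ∑ e, ℓ e
  have hL : 0 < L := Finset.sum_pos (fun e _ => hℓ e) Finset.univ_nonempty
  have hlam₀ : 0 ≤ lam := sInf_rayleighSet_nonneg fun e => (hℓ e).le
  rcases hlam₀.eq_or_lt with hlam | hlam
  · rwa [← hlam, zero_mul]
  obtain ⟨w, hw⟩ := hVD
  obtain ⟨e₀, he₀⟩ := exists_incident_edge s t w hconn
  set δ := min (ℓ e₀) (1 / (12 * lam * L))
  have hδ : 0 < δ := lt_min (hℓ e₀) (by positivity)
  have hsmall : 12 * lam * L * δ ≤ 1 := (le_div_iff₀' (by positivity)).1 (min_le_right _ _)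
  have hδL : δ ≤ L := (min_le_left _ _).trans
    (Finset.single_le_sum (fun e _ => (hℓ e).le) (Finset.mem_univ e₀))
  have hsup : sSup (polyaSet V E s t ℓ VD) ≤ (L - δ / 4) / lam :=
    Real.sSup_le (fun r hr => (le_div_iff₀' hlam).2 <|
      sInf_rayleighSet_mul_le_of_mem_polyaSet (fun e => (hℓ e).le) hw he₀ hδ (min_le_left _ _)
        hsmall hr) (div_nonneg (by linarith) hlam.le)
  calc lam * sSup (polyaSet V E s t ℓ VD) ≤ lam * ((L - δ / 4) / lam) :=
        mul_le_mul_of_nonneg_left hsup hlam.le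
    _ = L - δ / 4 := mul_div_cancel₀ _ hlam.ne'
    _ < L := by linarith

/-- Pólya-type inequality: for any compact connected metric graph with nonempty Dirichlet
vertex set, `λ₁(G) · T(G) < |G|`. -/
theorem stmt17 (V E : Type) [Fintype V] [Fintype E] [DecidableEq V] [Nonempty E]
    (s t : E → V) (ℓ : E → ℝ) (hℓ : ∀ e, 0 < ℓ e)
    (VD : Finset V) (hVD : VD.Nonempty)
    (hconn : ∀ v w : V, Relation.ReflTransGen
      (fun a b => ∃ e, (s e = a ∧ t e = b) ∨ (s e = b ∧ t e = a)) v w) :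
    sInf (rayleighSet V E s t ℓ VD) * sSup (polyaSet V E s t ℓ VD) < ∑ e, ℓ e :=
  stmt17_general V E s t ℓ hℓ VD hVD hconn
end
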